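/- Let H be a finite connected triangle-free simple graph with at least one edge, let k ≥ 1 be an integer, let H(k) be the join of H with the vertex-disjoint union of k triangles, and let G(k) = KG(H(k)) be the complement of the line graph of H(k). Then χ(G(k)) = τ(H(k)) if and only if α(H) ≥ 2k. -/

import Mathlib

open SimpleGraph

/-- `KG H` is the complement of the line graph of `H`: its vertices are the edges of `H`,
two of them being adjacent exactly when the corresponding edges of `H` are disjoint. -/
def KG {V : Type*} (H : SimpleGraph V) : SimpleGraph H.edgeSet where
  Adj e f := e ≠ f ∧ ∀ v, v ∈ (e : Sym2 V) → v ∉ (f : Sym2 V)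
  symm := by
    constructor
    rintro e f ⟨hne, h⟩
    exact ⟨hne.symm, fun v hvf hve => h v hve hvf⟩
  loopless := by
    constructor
    rintro e ⟨hne, -⟩
    exact hne rfl

/-- The chromatic number: least `n` such that `G` has a proper coloring with `n` colors. -/
noncomputable def chromNum {W : Type*} (G : SimpleGraph W) : ℕ :=
  sInf {n | G.Colorable n}

/-- A vertex cover: a set of vertices meeting every edge. -/
def IsVertexCover {V : Type*} (H : SimpleGraph V) (S : Set V) : Prop :=
  ∀ ⦃u v⦄, H.Adj u v → u ∈ S ∨ v ∈ S

/-- The vertex cover number. -/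
noncomputable def tauN {V : Type*} (H : SimpleGraph V) : ℕ :=
  sInf {n | ∃ S : Set V, _root_.IsVertexCover H S ∧ S.ncard = n}

/-- The independence number. -/
noncomputable def indepNum {V : Type*} (H : SimpleGraph V) : ℕ :=
  sSup {n | ∃ S : Set V, (∀ u ∈ S, ∀ v ∈ S, ¬ H.Adj u v) ∧ S.ncard = n}

/-- The join of two graphs on disjoint vertex sets: their disjoint union together with
all edges between a vertex of the first and a vertex of the second. -/
def gJoin {V₁ V₂ : Type*} (H₁ : SimpleGraph V₁) (H₂ : SimpleGraph V₂) :
    SimpleGraph (V₁ ⊕ V₂) where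
  Adj x y :=
    match x, y with
    | .inl a, .inl b => H₁.Adj a b
    | .inl _, .inr _ => True
    | .inr _, .inl _ => True
    | .inr a, .inr b => H₂.Adj a b
  symm := by
    constructor
    rintro (a | a) (b | b) h
    · exact h.symm
    · trivial
    · trivial
    · exact h.symm
  loopless := by
    constructor
    rintro (a | a) h
    · exact H₁.irrefl h
    · exact H₂.irrefl h

/-- The vertex-disjoint union of `k` triangles, on the vertex set `Fin k × Fin 3`. -/
def kTriangles (k : ℕ) : SimpleGraph (Fin k × Fin 3) where
  Adj p q := p.1 = q.1 ∧ p.2 ≠ q.2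
  symm := by
    constructor
    rintro p q ⟨h1, h2⟩
    exact ⟨h1.symm, h2.symm⟩
  loopless := by
    constructor
    rintro p ⟨-, h⟩
    exact h rfl

/-- `Hk H k` is the join of `H` with the vertex-disjoint union of `k` triangles. -/
def Hk {V : Type*} (H : SimpleGraph V) (k : ℕ) : SimpleGraph (V ⊕ Fin k × Fin 3) :=
  gJoin H (kTriangles k)

/-!
Two disjoint edges of `F` cannot share a colour in a proper colouring of `KG F`, so every colour
class is an intersecting family of edges: a star or a set of edges of one triangle. Hence
`χ(KG F)` is the least `|Z| + |T|` over sets `Z` of vertices and sets `T` of triangles such that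
every edge meets `Z` or lies in a triangle of `T`; vertex covers are the case `T = ∅`, so
`χ ≤ τ`.

For `F = H(k)`, the vertices of `H` and the `k` added triangles give `χ ≤ n + k`, whereas
`τ(H(k)) = n + 3k - max (α(H), k)`, as an independent set of `H(k)` lies in `H` or meets each
added triangle at most once. So `χ < τ` when `α(H) < 2k`. When `α(H) ≥ 2k`, the triangles of
`T`, each with at most two vertices in `H`, cover all edges among the vertices outside `Z`; a
case analysis on how many of those lie in `H` and in the added triangles yields
`|Z| + |T| ≥ n + 3k - α(H)`. In the tight case the vertices of `H` outside `Z` would span an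
induced perfect matching, which connectivity and triangle-freeness rule out.
-/

open Finset

section Invariants

variable {V : Type*}

theorem chromNum_le {G : SimpleGraph V} {n : ℕ} (h : G.Colorable n) : chromNum G ≤ n :=
  Nat.sInf_le h

theorem colorable_chromNum [Finite V] (G : SimpleGraph V) : G.Colorable (chromNum G) :=
  have := Fintype.ofFinite V
  Nat.sInf_mem (s := {n | G.Colorable n}) ⟨_, G.colorable_of_fintype⟩

theorem tauN_le {G : SimpleGraph V} {S : Finset V} (h : G.IsVertexCover S) :
    tauN G ≤ #S :=
  Nat.sInf_le ⟨S, h, Set.ncard_coe_finset S⟩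

theorem exists_isVertexCover_card_eq_tauN [Finite V] (G : SimpleGraph V) :
    ∃ S : Finset V, G.IsVertexCover S ∧ #S = tauN G := by
  obtain ⟨S, hS, hcard⟩ : tauN G ∈ {n | ∃ S : Set V, _root_.IsVertexCover G S ∧ S.ncard = n} :=
    Nat.sInf_mem ⟨_, Set.univ, fun _ _ _ => Or.inl trivial, rfl⟩
  exact ⟨(Set.toFinite S).toFinset, by rw [Set.Finite.coe_toFinset]; exact hS,
    by rwa [← Set.ncard_eq_toFinset_card]⟩

theorem indepNum_eq [Finite V] (G : SimpleGraph V) : _root_.indepNum G = G.indepNum := by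
  unfold _root_.indepNum SimpleGraph.indepNum
  congr 1
  ext n
  constructor
  · rintro ⟨S, hS, rfl⟩
    refine ⟨(Set.toFinite S).toFinset, ?_, ?_⟩
    · simpa [SimpleGraph.isIndepSet_iff, Set.Pairwise] using fun u hu v hv _ => hS u hu v hv
    · rw [← Set.ncard_eq_toFinset_card]
  · rintro ⟨s, hs, rfl⟩
    exact ⟨s, fun u hu v hv h => hs hu hv h.ne h, Set.ncard_coe_finset s⟩

end Invariants

section StarTriangleCover

variable {W : Type*} {F : SimpleGraph W}

theorem exists_isNClique_three_of_intersecting {s : Set (Sym2 W)} (hsF : s ⊆ F.edgeSet)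
    (hmeet : ∀ e ∈ s, ∀ f ∈ s, ∃ v ∈ e, v ∈ f) (hne : s.Nonempty)
    (hstar : ¬ ∃ v, ∀ e ∈ s, v ∈ e) :
    ∃ t : Finset W, F.IsNClique 3 t ∧ ∀ e ∈ s, ∀ v ∈ e, v ∈ t := by
  classical
  push Not at hstar
  have other_mem : ∀ {a b : W} {e : Sym2 W}, s(a, b) ∈ s → e ∈ s → a ∉ e → b ∈ e := by
    intro a b e hab he hae
    obtain ⟨v, hv, hve⟩ := hmeet _ hab e he
    rcases Sym2.mem_iff.mp hv with rfl | rfl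
    exacts [absurd hve hae, hve]
  obtain ⟨e₀, he₀⟩ := hne
  induction e₀ using Sym2.ind with | _ x y => ?_
  obtain ⟨e₁, he₁, hx₁⟩ := hstar x
  obtain ⟨z, rfl⟩ := Sym2.mem_iff_exists.mp (other_mem he₀ he₁ hx₁)
  obtain ⟨e₂, he₂, hy₂⟩ := hstar y
  obtain ⟨w, rfl⟩ := Sym2.mem_iff_exists.mp (other_mem (Sym2.eq_swap ▸ he₀) he₂ hy₂)
  have hzw : z = w := by
    rcases Sym2.mem_iff.mp (other_mem he₁ he₂ hy₂) with rfl | h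
    · simp at hx₁
    · exact h
  subst hzw
  have hxy : F.Adj x y := hsF he₀
  have hyz : F.Adj y z := hsF he₁
  have hxz : F.Adj x z := hsF he₂
  refine ⟨{x, y, z}, is3Clique_triple_iff.mpr ⟨hxy, hxz, hyz⟩, fun e he v hv => ?_⟩
  by_contra hvt
  simp only [Finset.mem_insert, Finset.mem_singleton, not_or] at hvt
  obtain ⟨b, rfl⟩ := Sym2.mem_iff_exists.mp hv
  have h₀ := other_mem he he₀ (by simp [hvt.1, hvt.2.1])
  have h₁ := other_mem he he₁ (by simp [hvt.2.1, hvt.2.2])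
  have h₂ := other_mem he he₂ (by simp [hvt.1, hvt.2.2])
  simp only [Sym2.mem_iff] at h₀ h₁ h₂
  rcases h₀ with rfl | rfl
  · rcases h₁ with h | h
    exacts [hxy.ne h, hxz.ne h]
  · rcases h₂ with h | h
    exacts [hxy.ne h.symm, hyz.ne h]

def IsStarTriangleCover (F : SimpleGraph W) (Z : Finset W) (T : Finset (Finset W)) : Prop :=
  (∀ t ∈ T, F.IsNClique 3 t) ∧ ∀ ⦃x y⦄, F.Adj x y → x ∈ Z ∨ y ∈ Z ∨ ∃ t ∈ T, x ∈ t ∧ y ∈ t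

theorem IsStarTriangleCover.colorable {Z : Finset W} {T : Finset (Finset W)}
    (h : IsStarTriangleCover F Z T) : (KG F).Colorable (#Z + #T) := by
  classical
  have hcol : ∀ e : F.edgeSet, ∃ w ∈ Z.disjSum T,
      w.elim (· ∈ (e : Sym2 W)) (fun t => ∀ v ∈ (e : Sym2 W), v ∈ t) := by
    rintro ⟨e, he⟩
    induction e using Sym2.ind with | _ x y => ?_
    rcases h.2 he with hx | hy | ⟨t, ht, hxt, hyt⟩
    · exact ⟨.inl x, by simpa using hx, by simp⟩
    · exact ⟨.inl y, by simpa using hy, by simp⟩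
    · exact ⟨.inr t, by simpa using ht, by simp [hxt, hyt]⟩
  choose col hcolZT hcol using hcol
  suffices C : (KG F).Coloring (Z.disjSum T) by simpa using C.colorable
  refine Coloring.mk (fun e => ⟨col e, hcolZT e⟩) ?_
  rintro e f ⟨-, hdisj⟩ hC
  have hcef : col e = col f := congrArg Subtype.val hC
  have he := hcol e
  have hf := hcol f
  rw [hcef] at he
  have hmem := hcolZT f
  generalize col f = w at he hf hmem
  rcases w with z | t
  · exact hdisj z he hf
  · -- two disjoint edges do not fit into a triangle
    have hsub : (e : Sym2 W).toFinset ∪ (f : Sym2 W).toFinset ⊆ t := by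
      intro v hv
      rcases Finset.mem_union.mp hv with hv | hv
      exacts [he v (Sym2.mem_toFinset.mp hv), hf v (Sym2.mem_toFinset.mp hv)]
    have hcard := Finset.card_le_card hsub
    rw [Finset.card_union_of_disjoint (Finset.disjoint_left.mpr fun v hve hvf =>
        hdisj v (Sym2.mem_toFinset.mp hve) (Sym2.mem_toFinset.mp hvf)),
      Sym2.card_toFinset_of_not_isDiag _ (F.not_isDiag_of_mem_edgeSet e.2),
      Sym2.card_toFinset_of_not_isDiag _ (F.not_isDiag_of_mem_edgeSet f.2),
      (h.1 t (by simpa using hmem)).card_eq] at hcard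
    omega

theorem exists_isStarTriangleCover_of_colorable [Fintype W] {c : ℕ}
    (hc : (KG F).Colorable c) : ∃ Z T, IsStarTriangleCover F Z T ∧ #Z + #T ≤ c := by
  classical
  obtain ⟨C⟩ := hc
  have hclass : ∀ j, ∃ w : W ⊕ Finset W, ∀ e : F.edgeSet, C e = j →
      w.elim (· ∈ (e : Sym2 W)) (fun t => F.IsNClique 3 t ∧ ∀ v ∈ (e : Sym2 W), v ∈ t) := by
    intro j
    set s : Set (Sym2 W) := (↑) '' {e : F.edgeSet | C e = j}
    have hmeet : ∀ e ∈ s, ∀ f ∈ s, ∃ v ∈ e, v ∈ f := by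
      rintro _ ⟨e, he, rfl⟩ _ ⟨f, hf, rfl⟩
      by_contra! hdisj
      by_cases hef : e = f
      · subst hef
        exact hdisj _ (Sym2.out_fst_mem _) (Sym2.out_fst_mem _)
      · exact C.valid ⟨hef, hdisj⟩ (he.trans hf.symm)
    rcases s.eq_empty_or_nonempty with hs | hs
    · exact ⟨.inr ∅, fun e he => (hs.subset ⟨e, he, rfl⟩).elim⟩
    by_cases hstar : ∃ v, ∀ e ∈ s, v ∈ e
    · obtain ⟨v, hv⟩ := hstar
      exact ⟨.inl v, fun e he => hv e ⟨e, he, rfl⟩⟩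
    · obtain ⟨t, ht, hts⟩ := exists_isNClique_three_of_intersecting
        (by rintro _ ⟨e, -, rfl⟩; exact e.2) hmeet hs hstar
      exact ⟨.inr t, fun e he => ⟨ht, hts e ⟨e, he, rfl⟩⟩⟩
  choose g hg using hclass
  set img := univ.image fun e : F.edgeSet => g (C e)
  refine ⟨img.toLeft, img.toRight, ⟨?_, ?_⟩, ?_⟩
  · intro t ht
    obtain ⟨e, -, he⟩ := Finset.mem_image.mp (Finset.mem_toRight.mp ht)
    have hgood := hg _ e rfl
    rw [he] at hgood
    exact hgood.1
  · intro x y hxy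
    have hmem : g (C ⟨s(x, y), hxy⟩) ∈ img := Finset.mem_image_of_mem _ (Finset.mem_univ _)
    have hgood := hg _ ⟨s(x, y), hxy⟩ rfl
    rcases hw : g (C ⟨s(x, y), hxy⟩) with v | t <;> rw [hw] at hmem hgood
    · rcases Sym2.mem_iff.mp hgood with rfl | rfl
      · exact .inl (Finset.mem_toLeft.mpr hmem)
      · exact .inr (.inl (Finset.mem_toLeft.mpr hmem))
    · exact .inr (.inr ⟨t, Finset.mem_toRight.mpr hmem, hgood.2 x (by simp), hgood.2 y (by simp)⟩)
  · calc #img.toLeft + #img.toRight = #img := Finset.card_toLeft_add_card_toRight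
      _ ≤ #(univ.image g) := Finset.card_le_card (Finset.image_subset_iff.mpr fun e _ =>
          Finset.mem_image_of_mem _ (Finset.mem_univ _))
      _ ≤ c := Finset.card_image_le.trans (by simp)

theorem SimpleGraph.IsVertexCover.isStarTriangleCover {Z : Finset W} (hZ : F.IsVertexCover Z) :
    IsStarTriangleCover F Z ∅ :=
  ⟨by simp, fun _ _ hxy => (hZ hxy).imp id .inl⟩

theorem chromNum_KG_le_tauN [Finite W] (F : SimpleGraph W) : chromNum (KG F) ≤ tauN F := by
  classical
  obtain ⟨Z, hZ, hcard⟩ := exists_isVertexCover_card_eq_tauN F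
  simpa [hcard] using chromNum_le hZ.isStarTriangleCover.colorable

end StarTriangleCover

section IndependentSets

variable {V : Type*} {H : SimpleGraph V}

theorem exists_isIndepSet_subset_forall_exists_adj (A : Finset V) :
    ∃ m ⊆ A, H.IsIndepSet m ∧ ∀ v ∈ A, v ∉ m → ∃ u ∈ m, H.Adj v u := by
  classical
  obtain ⟨m, hm, hmax⟩ := Finset.exists_max_image
    (A.powerset.filter fun m : Finset V => H.IsIndepSet (m : Set V)) Finset.card ⟨∅, by simp⟩
  rw [Finset.mem_filter, Finset.mem_powerset] at hm
  refine ⟨m, hm.1, hm.2, fun v hvA hvm => ?_⟩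
  by_contra! hv
  have hins : H.IsIndepSet (insert v m : Finset V) := by
    rw [Finset.coe_insert]
    exact hm.2.insert fun u hu _ => ⟨hv u hu, fun h => hv u hu h.symm⟩
  have := hmax (insert v m)
    (Finset.mem_filter.mpr ⟨Finset.mem_powerset.mpr (Finset.insert_subset hvA hm.1), hins⟩)
  rw [Finset.card_insert_of_notMem hvm] at this
  omega

/-- The edges `{v, nb v}`, `v ∈ D`, are pairwise disjoint and are all the edges of `H[A]`. -/
theorem card_lt_indepNum_of_matching [Finite V] (hconn : H.Connected)
    (htf : H.CliqueFree 3) {A D : Finset V} {nb : V → V} (hD : 2 ≤ #D) (hDA : D ⊆ A)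
    (hnbA : ∀ v ∈ D, nb v ∈ A) (hnbD : ∀ v ∈ D, nb v ∉ D) (hnb : Set.InjOn nb D)
    (hadj : ∀ v ∈ D, H.Adj v (nb v))
    (hmatch : ∀ u ∈ A, ∀ w ∈ A, H.Adj u w →
      ∃ v ∈ D, (u = v ∨ u = nb v) ∧ (w = v ∨ w = nb v)) :
    #D < H.indepNum := by
  classical
  have hpair : ∀ v ∈ D, ∀ v' ∈ D, ∀ x, (x = v ∨ x = nb v) → (x = v' ∨ x = nb v') → v = v' := by
    rintro v hv v' hv' x (rfl | rfl) (h | h)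
    · exact h
    · exact absurd (h ▸ hv) (hnbD v' hv')
    · exact absurd (h ▸ hv') (hnbD v hv)
    · exact hnb hv hv' h
  by_cases hA : ∃ v₀, v₀ ∉ A
  · obtain ⟨v₀, hv₀⟩ := hA
    -- an end of the pair `{v, nb v}` not adjacent to `v₀`; one exists as `H` is triangle-free
    set r : V → V := fun v => if H.Adj v₀ v then nb v else v
    have hr : ∀ v, r v = v ∨ r v = nb v := fun v => by
      by_cases h : H.Adj v₀ v <;> simp [r, h]
    have hrA : ∀ v ∈ D, r v ∈ A := fun v hv => by
      rcases hr v with h | h <;> rw [h]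
      exacts [hDA hv, hnbA v hv]
    have hrv₀ : ∀ v ∈ D, ¬ H.Adj v₀ (r v) := fun v hv h => by
      by_cases hv₀v : H.Adj v₀ v
      · simp only [r, hv₀v, if_true] at h
        exact htf {v₀, v, nb v} (is3Clique_triple_iff.mpr ⟨hv₀v, h, hadj v hv⟩)
      · simp [r, hv₀v] at h
    have hrinj : Set.InjOn r D := fun v hv v' hv' h =>
      hpair v hv v' hv' (r v) (hr v) (h ▸ hr v')
    have hindep : H.IsIndepSet (insert v₀ (D.image r) : Finset V) := by
      rw [Finset.coe_insert, Finset.coe_image]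
      refine Set.Pairwise.insert ?_ ?_
      · rintro _ ⟨v, hv, rfl⟩ _ ⟨v', hv', rfl⟩ hne h
        obtain ⟨w, hw, hvw, hv'w⟩ := hmatch _ (hrA v hv) _ (hrA v' hv') h
        obtain rfl := hpair v hv w hw _ (hr v) hvw
        obtain rfl := hpair v' hv' v hw _ (hr v') hv'w
        exact hne rfl
      · rintro _ ⟨v, hv, rfl⟩ -
        exact ⟨hrv₀ v hv, fun h => hrv₀ v hv h.symm⟩
    have := hindep.card_le_indepNum
    rwa [Finset.card_insert_of_notMem fun h => by
        obtain ⟨v, hv, hrv⟩ := Finset.mem_image.mp h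
        exact hv₀ (hrv ▸ hrA v hv),
      Finset.card_image_of_injOn hrinj] at this
  · -- every edge of `H` is a pair, so no walk leaves the pair `{v, nb v}`
    push Not at hA
    exfalso
    obtain ⟨v, hv, v', hv', hvv'⟩ := Finset.one_lt_card.mp hD
    obtain ⟨p⟩ := hconn.preconnected v v'
    obtain ⟨d, -, hd, hd'⟩ := p.exists_boundary_dart {x | x = v ∨ x = nb v} (.inl rfl)
      (by rintro (h | h); exacts [hvv' h.symm, hnbD v hv (h ▸ hv')])
    obtain ⟨w, hw, hdw, hdw'⟩ := hmatch _ (hA _) _ (hA _) d.adj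
    obtain rfl := hpair v hv w hw _ hd hdw
    exact hd' hdw'

theorem mapsTo_pair_injOn [DecidableEq V] {A m : Finset V} {L : Finset (Finset V)}
    (hL : ∀ s ∈ L, #s ≤ 2) (hcov : ∀ u ∈ A, ∀ w ∈ A, H.Adj u w → ∃ s ∈ L, u ∈ s ∧ w ∈ s)
    (hmA : m ⊆ A) {nb : V → V} (hnbm : ∀ v ∈ A, v ∉ m → nb v ∈ m)
    (hnb : ∀ v ∈ A, v ∉ m → H.Adj v (nb v)) :
    Set.MapsTo (fun v => ({v, nb v} : Finset V)) ↑(A \ m) ↑L ∧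
      Set.InjOn (fun v => ({v, nb v} : Finset V)) ↑(A \ m) := by
  constructor
  · intro v hv
    rw [Finset.coe_sdiff, Set.mem_sdiff] at hv
    show ({v, nb v} : Finset V) ∈ L
    obtain ⟨s, hs, hvs, hnbs⟩ := hcov v hv.1 (nb v) (hmA (hnbm v hv.1 hv.2)) (hnb v hv.1 hv.2)
    have hsub : ({v, nb v} : Finset V) ⊆ s := Finset.insert_subset hvs (by simpa using hnbs)
    rwa [Finset.eq_of_subset_of_card_le hsub (by
      rw [Finset.card_pair (hnb v hv.1 hv.2).ne]; exact hL s hs)]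
  · intro v hv v' hv' h
    replace h : ({v, nb v} : Finset V) = {v', nb v'} := h
    simp only [Finset.coe_sdiff, Set.mem_sdiff, Finset.mem_coe] at hv hv'
    have hv'm : v ∈ ({v', nb v'} : Finset V) := h ▸ Finset.mem_insert_self v _
    rcases Finset.mem_insert.mp hv'm with h' | h'
    · exact h'
    · exact absurd (Finset.mem_singleton.mp h' ▸ hnbm v' hv'.1 hv'.2) hv.2

theorem card_le_card_add_indepNum [Finite V] {A : Finset V} {L : Finset (Finset V)}
    (hL : ∀ s ∈ L, #s ≤ 2) (hcov : ∀ u ∈ A, ∀ w ∈ A, H.Adj u w → ∃ s ∈ L, u ∈ s ∧ w ∈ s) :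
    #A ≤ #L + H.indepNum := by
  classical
  obtain ⟨m, hmA, hm, hmax⟩ := exists_isIndepSet_subset_forall_exists_adj (H := H) A
  choose! nb hnbm hnb using hmax
  obtain ⟨hmaps, hinj⟩ := mapsTo_pair_injOn hL hcov hmA hnbm hnb
  have hDL := Finset.card_le_card_of_injOn _ hmaps hinj
  have hmα := hm.card_le_indepNum
  have hA := Finset.card_sdiff_add_card_eq_card hmA
  omega

/-- Excludes equality in `card_le_card_add_indepNum` when the sets of `L` also cover `A`. -/
theorem card_lt_indepNum_of_forall_mem_pair [Finite V] [DecidableEq V] (hconn : H.Connected)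
    (htf : H.CliqueFree 3) (hα : 2 ≤ H.indepNum) {A m : Finset V} {nb : V → V} (hmA : m ⊆ A)
    (hnbm : ∀ v ∈ A \ m, nb v ∈ m) (hnb : ∀ v ∈ A \ m, H.Adj v (nb v))
    (hcov : ∀ u ∈ A, ∃ v ∈ A \ m, u = v ∨ u = nb v)
    (hmatch : ∀ u ∈ A, ∀ w ∈ A, H.Adj u w →
      ∃ v ∈ A \ m, (u = v ∨ u = nb v) ∧ (w = v ∨ w = nb v)) :
    #m < H.indepNum := by
  by_contra! hmα
  have hnbD : ∀ v ∈ A \ m, nb v ∉ A \ m := fun v hv h =>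
    (Finset.mem_sdiff.mp h).2 (hnbm v hv)
  have hmD : m ⊆ (A \ m).image nb := by
    intro u hu
    obtain ⟨v, hv, rfl | rfl⟩ := hcov u (hmA hu)
    · exact absurd hu (Finset.mem_sdiff.mp hv).2
    · exact Finset.mem_image_of_mem nb hv
  have hDind : H.IsIndepSet ↑(A \ m) := by
    intro u hu w hw _ huw
    obtain ⟨v, hv, hu', hw'⟩ :=
      hmatch u (Finset.mem_sdiff.mp hu).1 w (Finset.mem_sdiff.mp hw).1 huw
    rcases hu' with rfl | rfl
    · rcases hw' with rfl | rfl
      exacts [huw.ne rfl, hnbD u hv hw]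
    · exact hnbD v hv hu
  have hDα := hDind.card_le_indepNum
  have hmcard := (Finset.card_le_card hmD).trans Finset.card_image_le
  have hnbinj : Set.InjOn nb ↑(A \ m) := by
    rw [← Finset.card_image_iff]
    exact le_antisymm Finset.card_image_le ((hDα.trans hmα).trans (Finset.card_le_card hmD))
  have := card_lt_indepNum_of_matching hconn htf (by omega) Finset.sdiff_subset
    (fun v hv => hmA (hnbm v hv)) hnbD hnbinj hnb hmatch
  omega

theorem card_add_one_le_card_add_indepNum [Finite V] (hconn : H.Connected)
    (htf : H.CliqueFree 3) (hα : 2 ≤ H.indepNum) {A : Finset V} {L : Finset (Finset V)}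
    (hL : ∀ s ∈ L, #s ≤ 2) (hcov : ∀ u ∈ A, ∀ w ∈ A, H.Adj u w → ∃ s ∈ L, u ∈ s ∧ w ∈ s)
    (hcovV : ∀ u ∈ A, ∃ s ∈ L, u ∈ s) :
    #A + 1 ≤ #L + H.indepNum := by
  classical
  obtain ⟨m, hmA, hm, hmax⟩ := exists_isIndepSet_subset_forall_exists_adj (H := H) A
  choose! nb hnbm hnb using hmax
  obtain ⟨hmaps, hinj⟩ := mapsTo_pair_injOn hL hcov hmA hnbm hnb
  have hDL := Finset.card_le_card_of_injOn _ hmaps hinj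
  have hmα := hm.card_le_indepNum
  have hA := Finset.card_sdiff_add_card_eq_card hmA
  by_contra! hlt
  have hpairs : (A \ m).image (fun v => ({v, nb v} : Finset V)) = L :=
    Finset.eq_of_subset_of_card_le (Finset.image_subset_iff.mpr hmaps)
      (by rw [Finset.card_image_of_injOn hinj]; omega)
  have hmemL : ∀ s ∈ L, ∀ u ∈ s, ∃ v ∈ A \ m, u = v ∨ u = nb v := by
    intro s hs u hu
    rw [← hpairs] at hs
    obtain ⟨v, hv, rfl⟩ := Finset.mem_image.mp hs
    exact ⟨v, hv, by simpa using hu⟩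
  have := card_lt_indepNum_of_forall_mem_pair hconn htf hα hmA
    (fun v hv => hnbm v (Finset.mem_sdiff.mp hv).1 (Finset.mem_sdiff.mp hv).2)
    (fun v hv => hnb v (Finset.mem_sdiff.mp hv).1 (Finset.mem_sdiff.mp hv).2)
    (fun u hu => by
      obtain ⟨s, hs, hus⟩ := hcovV u hu
      exact hmemL s hs u hus)
    (fun u hu w hw huw => by
      obtain ⟨s, hs, hus, hws⟩ := hcov u hu w hw huw
      rw [← hpairs] at hs
      obtain ⟨v, hv, rfl⟩ := Finset.mem_image.mp hs
      exact ⟨v, hv, by simpa using hus, by simpa using hws⟩)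
  omega

end IndependentSets

section Hk

variable {V : Type*} {H : SimpleGraph V} {k : ℕ}

@[simp] theorem hk_adj_inl_inl {u v : V} : (Hk H k).Adj (.inl u) (.inl v) ↔ H.Adj u v := Iff.rfl

@[simp] theorem hk_adj_inl_inr (u : V) (p : Fin k × Fin 3) : (Hk H k).Adj (.inl u) (.inr p) :=
  trivial

theorem card_le_of_isIndepSet_hk [Finite V] {U : Finset (V ⊕ Fin k × Fin 3)}
    (hU : (Hk H k).IsIndepSet U) : #U ≤ H.indepNum ∨ #U ≤ k := by
  rw [← Finset.card_toLeft_add_card_toRight]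
  rcases U.toLeft.eq_empty_or_nonempty with hL | ⟨u, hu⟩
  · right
    rw [hL, Finset.card_empty, zero_add]
    refine (Finset.card_le_card_of_injOn Prod.fst (fun _ _ => Finset.mem_univ _) ?_).trans
      (by simp)
    intro p hp q hq hpq
    by_contra hne
    exact hU (Finset.mem_toRight.mp hp) (Finset.mem_toRight.mp hq) (by simpa using hne)
      ⟨hpq, fun h => hne (Prod.ext hpq h)⟩
  · left
    have hR : U.toRight = ∅ := Finset.eq_empty_of_forall_notMem fun p hp =>
      hU (Finset.mem_toLeft.mp hu) (Finset.mem_toRight.mp hp) (by simp) (hk_adj_inl_inr u p)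
    rw [hR, Finset.card_empty, add_zero]
    exact IsIndepSet.card_le_indepNum fun u hu w hw huw h =>
      hU (Finset.mem_toLeft.mp hu) (Finset.mem_toLeft.mp hw) (by simpa using huw) h

variable [Fintype V]

theorem card_verts_hk : Fintype.card (V ⊕ Fin k × Fin 3) = Fintype.card V + 3 * k := by
  simp [mul_comm]

theorem tauN_hk_add_indepNum_le (H : SimpleGraph V) (k : ℕ) :
    tauN (Hk H k) + H.indepNum ≤ Fintype.card V + 3 * k := by
  classical
  obtain ⟨s, hs⟩ := H.exists_isNIndepSet_indepNum
  have hU : (Hk H k).IsIndepSet (s.disjSum ∅ : Finset (V ⊕ Fin k × Fin 3)) := by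
    rintro (u | p) hu (w | q) hw - h <;> simp at hu hw
    exact hs.isIndepSet hu hw (by rintro rfl; exact h.ne rfl) h
  have hZ : (Hk H k).IsVertexCover ↑(s.disjSum ∅ : Finset (V ⊕ Fin k × Fin 3))ᶜ := by
    rwa [Finset.coe_compl, isVertexCover_compl]
  have := tauN_le hZ
  have := Finset.card_compl_add_card (s.disjSum ∅ : Finset (V ⊕ Fin k × Fin 3))
  rw [Finset.card_disjSum, Finset.card_empty, hs.card_eq, card_verts_hk] at *
  omega

theorem le_tauN_hk (H : SimpleGraph V) (k : ℕ) :
    Fintype.card V + 3 * k ≤ tauN (Hk H k) + max H.indepNum k := by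
  classical
  obtain ⟨Z, hZ, hcard⟩ := exists_isVertexCover_card_eq_tauN (Hk H k)
  have hU : (Hk H k).IsIndepSet ↑Zᶜ := by
    rwa [Finset.coe_compl, isIndepSet_compl_iff_isVertexCover]
  have := Finset.card_compl_add_card Z
  rw [card_verts_hk] at this
  rcases card_le_of_isIndepSet_hk hU with h | h <;> omega

theorem colorable_KG_hk (H : SimpleGraph V) (k : ℕ) :
    (KG (Hk H k)).Colorable (Fintype.card V + k) := by
  classical
  set triangle : Fin k → Finset (V ⊕ Fin k × Fin 3) := fun i => univ.image fun x => .inr (i, x)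
  have hcover : IsStarTriangleCover (Hk H k) (univ.disjSum ∅) (univ.image triangle) := by
    refine ⟨?_, ?_⟩
    · simp only [Finset.mem_image, Finset.mem_univ, true_and, forall_exists_index,
        forall_apply_eq_imp_iff]
      intro i
      refine ⟨?_, ?_⟩
      · simp only [triangle, Finset.coe_image, Finset.coe_univ, Set.image_univ]
        rintro _ ⟨x, rfl⟩ _ ⟨y, rfl⟩ hxy
        exact ⟨rfl, fun h => hxy (by simp_all)⟩
      · rw [Finset.card_image_of_injective _ fun x y h => by simpa using h]
        simp
    · rintro (u | p) (w | q) h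
      · simp
      · simp
      · simp
      · exact .inr (.inr ⟨triangle p.1, Finset.mem_image_of_mem _ (Finset.mem_univ _),
          by simp [triangle], by simp [triangle, h.1]⟩)
  refine hcover.colorable.mono ?_
  simpa using Finset.card_image_le.trans (by simp)

end Hk

section TrianglesOfHk

variable {V : Type*} {H : SimpleGraph V} {k : ℕ} {t : Finset (V ⊕ Fin k × Fin 3)}

theorem toRight_nonempty_of_isNClique_hk (htf : H.CliqueFree 3) (ht : (Hk H k).IsNClique 3 t) :
    t.toRight.Nonempty := by
  rw [Finset.nonempty_iff_ne_empty]
  intro hR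
  refine htf t.toLeft ⟨fun u hu w hw huw => ?_, ?_⟩
  · exact ht.isClique (Finset.mem_toLeft.mp hu) (Finset.mem_toLeft.mp hw) (by simpa using huw)
  · have := t.card_toLeft_add_card_toRight
    rw [hR, Finset.card_empty, add_zero, ht.card_eq] at this
    exact this

theorem card_toLeft_mul_card_toRight_le_two (htf : H.CliqueFree 3)
    (ht : (Hk H k).IsNClique 3 t) : #t.toLeft * #t.toRight ≤ 2 := by
  have hsum := t.card_toLeft_add_card_toRight
  rw [ht.card_eq] at hsum
  have hR := (toRight_nonempty_of_isNClique_hk htf ht).card_pos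
  have hL : #t.toLeft ≤ 2 := by omega
  interval_cases h : #t.toLeft <;> omega

theorem card_toLeft_le_two (htf : H.CliqueFree 3) (ht : (Hk H k).IsNClique 3 t) :
    #t.toLeft ≤ 2 := by
  have hsum := t.card_toLeft_add_card_toRight
  rw [ht.card_eq] at hsum
  have := (toRight_nonempty_of_isNClique_hk htf ht).card_pos
  omega

theorem fst_eq_of_isClique_hk (ht : (Hk H k).IsClique t) {p q : Fin k × Fin 3}
    (hp : .inr p ∈ t) (hq : .inr q ∈ t) : p.1 = q.1 := by
  by_cases hpq : p = q
  · rw [hpq]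
  · exact (ht hp hq (by simpa using hpq)).1

variable [DecidableEq V] {T : Finset (Finset (V ⊕ Fin k × Fin 3))}

theorem card_mul_card_le_of_forall_exists_mem (htf : H.CliqueFree 3)
    (hT : ∀ t ∈ T, (Hk H k).IsNClique 3 t) {A : Finset V} {B : Finset (Fin k × Fin 3)}
    (hcov : ∀ u ∈ A, ∀ p ∈ B, ∃ t ∈ T, .inl u ∈ t ∧ .inr p ∈ t) :
    #A * #B ≤ 2 * #T := by
  choose! τ hτT hτu hτp using hcov
  rw [← Finset.card_product]
  refine Finset.card_le_mul_card_image_of_maps_to (f := fun x => τ x.1 x.2)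
    (fun x hx => hτT _ (Finset.mem_product.mp hx).1 _ (Finset.mem_product.mp hx).2) 2
    fun t ht => ?_
  refine (Finset.card_le_card fun x hx => ?_).trans
    ((Finset.card_product _ _).trans_le (card_toLeft_mul_card_toRight_le_two htf (hT t ht)))
  obtain ⟨hAB, rfl⟩ := Finset.mem_filter.mp hx
  obtain ⟨hu, hp⟩ := Finset.mem_product.mp hAB
  exact Finset.mem_product.mpr ⟨Finset.mem_toLeft.mpr (hτu _ hu _ hp),
    Finset.mem_toRight.mpr (hτp _ hu _ hp)⟩

def trianglesAt (T : Finset (Finset (V ⊕ Fin k × Fin 3))) (i : Fin k) :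
    Finset (Finset (V ⊕ Fin k × Fin 3)) :=
  T.filter fun t => ∃ x, .inr (i, x) ∈ t

theorem card_le_mul_add_card {c : ℕ} (hT : ∀ t ∈ T, (Hk H k).IsNClique 3 t)
    {B : Finset (Fin k × Fin 3)} (hB : ∀ i, #(B.filter (·.1 = i)) ≤ c + #(trianglesAt T i)) :
    #B ≤ c * k + #T := by
  have hdisj : (Set.univ : Set (Fin k)).PairwiseDisjoint (trianglesAt T) := by
    intro i _ j _ hij
    refine Finset.disjoint_left.mpr fun t hti htj => hij ?_
    obtain ⟨hT', x, hx⟩ := Finset.mem_filter.mp hti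
    obtain ⟨-, y, hy⟩ := Finset.mem_filter.mp htj
    exact fst_eq_of_isClique_hk (hT t hT').isClique hx hy
  calc #B = ∑ i, #(B.filter (·.1 = i)) :=
        Finset.card_eq_sum_card_fiberwise fun _ _ => Finset.mem_univ _
    _ ≤ ∑ i, (c + #(trianglesAt T i)) := Finset.sum_le_sum fun i _ => hB i
    _ = c * k + #(univ.biUnion (trianglesAt T)) := by
        rw [Finset.sum_add_distrib, Finset.card_biUnion (by simpa using hdisj)]
        simp [mul_comm]
    _ ≤ c * k + #T := by
        gcongr
        exact Finset.biUnion_subset.mpr fun i _ => Finset.filter_subset _ _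

theorem card_filter_fst_le_three (B : Finset (Fin k × Fin 3)) (i : Fin k) :
    #(B.filter (·.1 = i)) ≤ 3 := by
  refine (Finset.card_le_card_of_injOn Prod.snd (fun _ _ => Finset.mem_univ _) ?_).trans
    (by simp)
  intro p hp q hq h
  exact Prod.ext ((Finset.mem_filter.mp hp).2.trans (Finset.mem_filter.mp hq).2.symm) h

end TrianglesOfHk

section LowerBound

variable {V : Type*} [DecidableEq V] {H : SimpleGraph V} {k : ℕ}
  {T : Finset (Finset (V ⊕ Fin k × Fin 3))}

theorem card_filter_fst_le_two_add {B : Finset (Fin k × Fin 3)}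
    (hcov : ∀ p ∈ B, ∀ q ∈ B, (Hk H k).Adj (.inr p) (.inr q) → ∃ t ∈ T, .inr p ∈ t ∧ .inr q ∈ t)
    (i : Fin k) : #(B.filter (·.1 = i)) ≤ 2 + #(trianglesAt T i) := by
  have h3 := card_filter_fst_le_three B i
  by_cases h2 : #(B.filter (·.1 = i)) ≤ 2
  · omega
  obtain ⟨p, hp, q, hq, hpq⟩ := Finset.one_lt_card.mp (by omega : 1 < #(B.filter (·.1 = i)))
  rw [Finset.mem_filter] at hp hq
  have hfst : p.1 = q.1 := hp.2.trans hq.2.symm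
  obtain ⟨t, ht, hpt, -⟩ := hcov p hp.1 q hq.1 ⟨hfst, fun h => hpq (Prod.ext hfst h)⟩
  have : 0 < #(trianglesAt T i) :=
    Finset.card_pos.mpr ⟨t, Finset.mem_filter.mpr ⟨ht, p.2, by rwa [← hp.2]⟩⟩
  omega

theorem card_filter_fst_le_one_add (htf : H.CliqueFree 3)
    (hT : ∀ t ∈ T, (Hk H k).IsNClique 3 t) {u : V} {B : Finset (Fin k × Fin 3)}
    (hcov : ∀ p ∈ B, ∃ t ∈ T, .inl u ∈ t ∧ .inr p ∈ t) (i : Fin k) :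
    #(B.filter (·.1 = i)) ≤ 1 + #(trianglesAt T i) := by
  have h3 := card_filter_fst_le_three B i
  have h2 := card_mul_card_le_of_forall_exists_mem htf (T := trianglesAt T i) (A := {u})
    (B := B.filter (·.1 = i))
    (fun t ht => hT t (Finset.mem_filter.mp ht).1) fun u' hu' p hp => by
      obtain ⟨hpB, rfl⟩ := Finset.mem_filter.mp hp
      obtain ⟨t, ht, hut, hpt⟩ := hcov p hpB
      exact ⟨t, Finset.mem_filter.mpr ⟨ht, p.2, hpt⟩, Finset.mem_singleton.mp hu' ▸ hut, hpt⟩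
  rw [Finset.card_singleton, one_mul] at h2
  omega

theorem card_le_card_add_indepNum_of_triangle_cover [Finite V] (hconn : H.Connected)
    (htf : H.CliqueFree 3) (hk : 1 ≤ k) (hα : 2 * k ≤ H.indepNum)
    (hT : ∀ t ∈ T, (Hk H k).IsNClique 3 t) {U : Finset (V ⊕ Fin k × Fin 3)}
    (hcov : ∀ x ∈ U, ∀ y ∈ U, (Hk H k).Adj x y → ∃ t ∈ T, x ∈ t ∧ y ∈ t) :
    #U ≤ #T + H.indepNum := by
  rw [← U.card_toLeft_add_card_toRight]
  have hcovL : ∀ u ∈ U.toLeft, ∀ w ∈ U.toLeft, H.Adj u w →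
      ∃ s ∈ T.image Finset.toLeft, u ∈ s ∧ w ∈ s := fun u hu w hw huw => by
    obtain ⟨t, ht, hut, hwt⟩ :=
      hcov _ (Finset.mem_toLeft.mp hu) _ (Finset.mem_toLeft.mp hw) (hk_adj_inl_inl.mpr huw)
    exact ⟨t.toLeft, Finset.mem_image_of_mem _ ht, by simpa using hut, by simpa using hwt⟩
  have hcovLR : ∀ u ∈ U.toLeft, ∀ p ∈ U.toRight, ∃ t ∈ T, .inl u ∈ t ∧ .inr p ∈ t :=
    fun u hu p hp => hcov _ (Finset.mem_toLeft.mp hu) _ (Finset.mem_toRight.mp hp)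
      (hk_adj_inl_inr u p)
  have hL : ∀ s ∈ T.image Finset.toLeft, #s ≤ 2 := by
    simpa using fun t ht => card_toLeft_le_two htf (hT t ht)
  have hLT : #(T.image Finset.toLeft) ≤ #T := Finset.card_image_le
  rcases Nat.lt_or_ge #U.toLeft 2 with hA | hA
  · rcases U.toLeft.eq_empty_or_nonempty with hA₀ | ⟨u, hu⟩
    · have := card_le_mul_add_card hT (card_filter_fst_le_two_add fun p hp q hq =>
        hcov _ (Finset.mem_toRight.mp hp) _ (Finset.mem_toRight.mp hq))
      rw [hA₀, Finset.card_empty]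
      omega
    · have := card_le_mul_add_card hT (card_filter_fst_le_one_add htf hT (hcovLR u hu))
      omega
  rcases Nat.lt_or_ge #U.toRight 2 with hB | hB
  · rcases U.toRight.eq_empty_or_nonempty with hB₀ | ⟨p, hp⟩
    · have := card_le_card_add_indepNum hL hcovL
      rw [hB₀, Finset.card_empty]
      omega
    · have := card_add_one_le_card_add_indepNum hconn htf (by omega) hL hcovL fun u hu => by
        obtain ⟨t, ht, hut, -⟩ := hcovLR u hu p hp
        exact ⟨t.toLeft, Finset.mem_image_of_mem _ ht, by simpa using hut⟩
      omega
  · -- `2 (a + b) ≤ a b + 4` for `a, b ≥ 2`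
    have := card_mul_card_le_of_forall_exists_mem htf hT hcovLR
    nlinarith

theorem IsStarTriangleCover.card_verts_hk_le [Fintype V] {Z : Finset (V ⊕ Fin k × Fin 3)}
    (h : IsStarTriangleCover (Hk H k) Z T) (hconn : H.Connected) (htf : H.CliqueFree 3)
    (hk : 1 ≤ k) (hα : 2 * k ≤ H.indepNum) :
    Fintype.card V + 3 * k ≤ #Z + #T + H.indepNum := by
  have := card_le_card_add_indepNum_of_triangle_cover hconn htf hk hα h.1 (U := Zᶜ)
    fun x hx y hy hxy => by
      rw [Finset.mem_compl] at hx hy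
      simpa [hx, hy] using h.2 hxy
  have := Finset.card_compl_add_card Z
  rw [card_verts_hk] at this
  omega

end LowerBound

theorem chromNum_KG_Hk_eq_tauN_iff_general {V : Type*} [Fintype V] (H : SimpleGraph V)
    (hconn : H.Connected) (htf : H.CliqueFree 3)
    (k : ℕ) (hk : 1 ≤ k) :
    chromNum (KG (Hk H k)) = tauN (Hk H k) ↔ 2 * k ≤ _root_.indepNum H := by
  classical
  rw [indepNum_eq]
  have hχτ := chromNum_KG_le_tauN (Hk H k)
  have hχ := chromNum_le (colorable_KG_hk H k)
  have hτ := tauN_hk_add_indepNum_le H k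
  constructor
  · intro h
    by_contra! hα
    have := le_tauN_hk H k
    have : max H.indepNum k < 2 * k := max_lt hα (by omega)
    omega
  · intro hα
    obtain ⟨Z, T, hZT, hc⟩ :=
      exists_isStarTriangleCover_of_colorable (colorable_chromNum (KG (Hk H k)))
    have := hZT.card_verts_hk_le hconn htf hk hα
    omega

/-- For a connected triangle-free graph `H` with at least one edge, the chromatic number of
the complement of the line graph of the join `Hk H k` of `H` with `k` disjoint triangles
equals the vertex cover number of `Hk H k` if and only if the independence number of `H`
is at least `2k`. -/
theorem chromNum_KG_Hk_eq_tauN_iff {V : Type*} [Fintype V] (H : SimpleGraph V)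
    (hconn : H.Connected) (htf : H.CliqueFree 3) (hE : H.edgeSet.Nonempty)
    (k : ℕ) (hk : 1 ≤ k) :
    chromNum (KG (Hk H k)) = tauN (Hk H k) ↔ 2 * k ≤ _root_.indepNum H :=
  chromNum_KG_Hk_eq_tauN_iff_general H hconn htf k hk
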